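/- arXiv:2110.08549 — 6 statements merged into one kernel-verified Lean document; each statement's English description precedes it below -/
import Mathlib

section
/- The complement of the discharging flexibility of a fleet relative to the nonnegative quadrant, F^∁_{p̄,x} = {(p,E) ∈ [0,∞)² : E > Ω_{p̄,x}(p)}, is a convex subset of ℝ². -/
open MeasureTheory Set Finset

/-- The E-p transform of a signal `P`: the energy required above power rating `p`. -/
noncomputable def EpTransform (P : ℝ → ℝ) (p : ℝ) : ℝ :=
  ∫ t in Set.Ioi (0:ℝ), max (P t - p) 0

/-- The worst-case reference signal `R_{p̄,x}(t) = Σᵢ p̄ᵢ·𝟙[0 ≤ t < xᵢ]`. -/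
noncomputable def worstCase {n : ℕ} (pbar x : Fin n → ℝ) (t : ℝ) : ℝ :=
  ∑ i, if 0 ≤ t ∧ t < x i then pbar i else 0

/-- The discharging capacity curve `Ω_{p̄,x}`. -/
noncomputable def capacity {n : ℕ} (pbar x : Fin n → ℝ) (p : ℝ) : ℝ :=
  EpTransform (worstCase pbar x) p

/-! The set is the strict epigraph of `Ω` over `[0, ∞)`, cut by the half-plane `E ≥ 0`, so it
suffices that `Ω` is convex on `[0, ∞)`. This holds for the E-p transform of any signal that
is integrable on `(0, ∞)`: for `p ≥ 0` the integrand `max (P t - p) 0` is dominated by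
`|P t|`, and it is convex in `p` for every fixed `t`, so convexity passes through the
integral. The worst-case signal is a finite sum of constants on bounded intervals, hence
integrable. -/

lemma convexOn_max_sub_zero (c : ℝ) : ConvexOn ℝ univ fun p : ℝ => max (c - p) 0 :=
  ((convexOn_const c convex_univ).sub (concaveOn_id convex_univ)).sup
    (convexOn_const 0 convex_univ)

lemma MeasureTheory.IntegrableOn.max_sub_const_zero {P : ℝ → ℝ} {s : Set ℝ}
    (hP : IntegrableOn P s) {p : ℝ} (hp : 0 ≤ p) :
    IntegrableOn (fun t => max (P t - p) 0) s := by
  refine hP.norm.mono'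
    ((hP.1.sub aestronglyMeasurable_const).sup aestronglyMeasurable_const) ?_
  filter_upwards with t
  rw [Real.norm_eq_abs, abs_of_nonneg (le_max_right _ _)]
  exact max_le (by linarith [Real.le_norm_self (P t)]) (norm_nonneg _)

lemma EpTransform_convexOn {P : ℝ → ℝ} (hP : IntegrableOn P (Ioi 0)) :
    ConvexOn ℝ (Ici 0) (EpTransform P) := by
  refine ⟨convex_Ici 0, fun p hp q hq a b ha hb hab => ?_⟩
  have hint : ∀ r : ℝ, 0 ≤ r → IntegrableOn (fun t => max (P t - r) 0) (Ioi 0) :=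
    fun r hr => hP.max_sub_const_zero hr
  calc EpTransform P (a • p + b • q)
      ≤ ∫ t in Ioi 0, (a * max (P t - p) 0 + b * max (P t - q) 0) :=
        integral_mono (hint _ ((convex_Ici 0) hp hq ha hb hab))
          (((hint p hp).const_mul a).add ((hint q hq).const_mul b))
          fun t => (convexOn_max_sub_zero (P t)).2 (mem_univ p) (mem_univ q) ha hb hab
    _ = a • EpTransform P p + b • EpTransform P q := by
        rw [integral_add ((hint p hp).const_mul a) ((hint q hq).const_mul b),
          integral_const_mul, integral_const_mul]
        rfl

lemma worstCase_integrable {n : ℕ} (pbar x : Fin n → ℝ) : Integrable (worstCase pbar x) := by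
  refine integrable_finsetSum _ fun i _ => ?_
  have hind : (fun t : ℝ => if 0 ≤ t ∧ t < x i then pbar i else 0)
      = (Ico 0 (x i)).indicator fun _ => pbar i := by
    funext t
    simp [indicator, Set.mem_Ico]
  rw [hind]
  exact (integrable_indicator_iff measurableSet_Ico).2 (integrableOn_const measure_Ico_lt_top.ne)

theorem flexibility_compl_convex_general {n : ℕ} (pbar x : Fin n → ℝ) :
    Convex ℝ {q : ℝ × ℝ | 0 ≤ q.1 ∧ 0 ≤ q.2 ∧ capacity pbar x q.1 < q.2} := by
  have hepi :=
    (EpTransform_convexOn (worstCase_integrable pbar x).integrableOn).convex_strict_epigraph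
  have hE : Convex ℝ {q : ℝ × ℝ | 0 ≤ q.2} :=
    convex_halfSpace_ge (LinearMap.snd ℝ ℝ ℝ).isLinear 0
  convert hE.inter hepi using 1
  ext q
  simp only [Set.mem_ofPred_eq, Set.mem_inter_iff, Set.mem_Ici, capacity]
  tauto

/-- The complement of the discharging flexibility, relative to the nonnegative quadrant,
`F^∁_{p̄,x} = {(p,E) ∈ [0,∞)² : E > Ω_{p̄,x}(p)}`, is convex. -/
theorem flexibility_compl_convex {n : ℕ} (pbar x : Fin n → ℝ)
    (hp : ∀ i, 0 < pbar i) (hx : ∀ i, 0 ≤ x i) :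
    Convex ℝ {q : ℝ × ℝ | 0 ≤ q.1 ∧ 0 ≤ q.2 ∧ capacity pbar x q.1 < q.2} :=
  flexibility_compl_convex_general pbar x
end

section
/- Suppose the devices of a fleet are indexed so that x₁ ≥ x₂ ≥ ... ≥ xₙ ≥ 0, and let P_k = Σ_{i=1}^k p̄ᵢ (with P₀ = 0). Then the capacity curve is piecewise linear: for every k ∈ {1,...,n} and every p ∈ [P_{k−1}, P_k], Ω_{p̄,x}(p) = Σ_{i=k+1}^n p̄ᵢ xᵢ + (P_k − p)·x_k. In particular, Ω_{p̄,x}(P_k) = Σ_{i=k+1}^n p̄ᵢ xᵢ for k = 0, 1, ..., n. -/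
/-!
Because the times-to-go are sorted, the devices still active at a time `t ≥ 0` form an initial
segment. Hence for `p` between the cumulative powers of the devices before `j` and up to `j`
(0-based), the excess `R(t) - p` is `(P_{j+1} - p) + Σ_{i > j, t < xᵢ} p̄ᵢ ≥ 0` while `t < x_j`,
and `≤ 0` afterwards. So `max (R(t) - p) 0` is a sum of indicators of intervals `[0, xᵢ)`, whose
integrals are read off directly.
-/

open MeasureTheory Set Finset

/-- Cumulative power `P_k = Σ_{i=1}^k p̄ᵢ` (1-based description, `P₀ = 0`). -/
def cumPower {n : ℕ} (pbar : Fin n → ℝ) (k : ℕ) : ℝ :=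
  ∑ i : Fin n, if (i : ℕ) < k then pbar i else 0

lemma ite_Ico_eq_indicator (c A : ℝ) :
    (fun t : ℝ => if 0 ≤ t ∧ t < c then A else 0) = (Ico 0 c).indicator fun _ => A := by
  ext t
  simp only [indicator_apply, Set.mem_Ico]

lemma integrableOn_Ioi_ite_Ico (c A : ℝ) :
    IntegrableOn (fun t : ℝ => if 0 ≤ t ∧ t < c then A else 0) (Ioi 0) := by
  rw [ite_Ico_eq_indicator]
  exact ((integrable_indicator_iff measurableSet_Ico).2
    (integrableOn_const measure_Ico_lt_top.ne)).integrableOn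

lemma setIntegral_Ioi_ite_Ico {c : ℝ} (hc : 0 ≤ c) (A : ℝ) :
    ∫ t in Ioi 0, (if 0 ≤ t ∧ t < c then A else 0) = A * c := by
  have hIoo : Set.Ioi (0 : ℝ) ∩ Set.Ico 0 c = Set.Ioo 0 c := by
    ext t
    exact ⟨fun h => ⟨h.1, h.2.2⟩, fun h => ⟨h.1, h.1.le, h.2⟩⟩
  rw [ite_Ico_eq_indicator, setIntegral_indicator measurableSet_Ico, hIoo,
    setIntegral_const, Real.volume_real_Ioo_of_le hc, smul_eq_mul, sub_zero, mul_comm]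

lemma setIntegral_Ioi_sum_ite_Ico {ι : Type*} (s : Finset ι) (a y : ι → ℝ)
    (hy : ∀ i ∈ s, 0 ≤ y i) :
    ∫ t in Ioi 0, ∑ i ∈ s, (if 0 ≤ t ∧ t < y i then a i else 0) = ∑ i ∈ s, a i * y i := by
  rw [integral_finsetSum s fun i _ => integrableOn_Ioi_ite_Ico (y i) (a i)]
  exact sum_congr rfl fun i hi => setIntegral_Ioi_ite_Ico (hy i hi) (a i)

variable {n : ℕ} {pbar x : Fin n → ℝ}

lemma worstCase_eq_sum_Iic_add_sum_Ioi (j : Fin n) (t : ℝ) :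
    worstCase pbar x t = (∑ i ∈ Iic j, if 0 ≤ t ∧ t < x i then pbar i else 0)
      + ∑ i ∈ Ioi j, if 0 ≤ t ∧ t < x i then pbar i else 0 := by
  rw [worstCase, ← sum_filter_add_sum_filter_not univ (· ≤ j)]
  simp only [not_le, filter_ge_eq_Iic, filter_lt_eq_Ioi]

lemma worstCase_nonneg (hp : ∀ i, 0 ≤ pbar i) (t : ℝ) : 0 ≤ worstCase pbar x t :=
  sum_nonneg fun i _ => ite_nonneg (hp i) le_rfl

lemma max_worstCase_sub_eq (hp : ∀ i, 0 ≤ pbar i) (hx : Antitone x) {j : Fin n} {p : ℝ}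
    (hlo : ∑ i ∈ Iio j, pbar i ≤ p) (hhi : p ≤ ∑ i ∈ Iic j, pbar i) (t : ℝ) :
    max (worstCase pbar x t - p) 0 =
      (∑ i ∈ Ioi j, if 0 ≤ t ∧ t < x i then pbar i else 0)
        + if 0 ≤ t ∧ t < x j then ∑ i ∈ Iic j, pbar i - p else 0 := by
  rw [worstCase_eq_sum_Iic_add_sum_Ioi j]
  by_cases ht : 0 ≤ t ∧ t < x j
  · have head : (∑ i ∈ Iic j, if 0 ≤ t ∧ t < x i then pbar i else 0) = ∑ i ∈ Iic j, pbar i :=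
      sum_congr rfl fun i hi => if_pos ⟨ht.1, ht.2.trans_le (hx (mem_Iic.1 hi))⟩
    have tail : 0 ≤ ∑ i ∈ Ioi j, if 0 ≤ t ∧ t < x i then pbar i else 0 :=
      sum_nonneg fun i _ => ite_nonneg (hp i) le_rfl
    rw [head, if_pos ht, max_eq_left (by linarith)]
    ring
  · have head : (∑ i ∈ Iic j, if 0 ≤ t ∧ t < x i then pbar i else 0) ≤ ∑ i ∈ Iio j, pbar i := by
      rw [Iic_eq_cons_Iio, sum_cons, if_neg ht, zero_add]
      exact sum_le_sum fun i _ => by split_ifs; exacts [le_rfl, hp i]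
    have tail : (∑ i ∈ Ioi j, if 0 ≤ t ∧ t < x i then pbar i else 0) = 0 :=
      sum_eq_zero fun i hi => if_neg fun h => ht ⟨h.1, h.2.trans_le (hx (mem_Ioi.1 hi).le)⟩
    rw [tail, if_neg ht, max_eq_right (by linarith), add_zero]

theorem capacity_eq_of_mem_Icc (hp : ∀ i, 0 ≤ pbar i) (hx₀ : ∀ i, 0 ≤ x i) (hx : Antitone x)
    (j : Fin n) {p : ℝ} (hlo : ∑ i ∈ Iio j, pbar i ≤ p) (hhi : p ≤ ∑ i ∈ Iic j, pbar i) :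
    capacity pbar x p = ∑ i ∈ Ioi j, pbar i * x i + (∑ i ∈ Iic j, pbar i - p) * x j := by
  simp only [capacity, EpTransform, max_worstCase_sub_eq hp hx hlo hhi]
  rw [integral_add (integrable_finsetSum _ fun i _ => integrableOn_Ioi_ite_Ico _ _)
      (integrableOn_Ioi_ite_Ico _ _), setIntegral_Ioi_sum_ite_Ico _ _ _ fun i _ => hx₀ i,
    setIntegral_Ioi_ite_Ico (hx₀ j)]

theorem capacity_zero (hp : ∀ i, 0 ≤ pbar i) (hx₀ : ∀ i, 0 ≤ x i) :
    capacity pbar x 0 = ∑ i, pbar i * x i := by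
  have hR (t : ℝ) : max (worstCase pbar x t - 0) 0 = worstCase pbar x t := by
    rw [sub_zero, max_eq_left (worstCase_nonneg hp t)]
  simp only [capacity, EpTransform, hR]
  exact setIntegral_Ioi_sum_ite_Ico _ _ _ fun i _ => hx₀ i

lemma cumPower_val (j : Fin n) : cumPower pbar j = ∑ i ∈ Iio j, pbar i := by
  rw [cumPower, ← sum_filter, ← filter_gt_eq_Iio]
  simp only [Fin.val_fin_lt]

lemma cumPower_val_add_one (j : Fin n) : cumPower pbar (j + 1) = ∑ i ∈ Iic j, pbar i := by
  rw [cumPower, ← sum_filter, ← filter_ge_eq_Iic]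
  simp only [Nat.lt_add_one_iff, Fin.val_fin_le]

lemma sum_ite_val_add_one_le (j : Fin n) (f : Fin n → ℝ) :
    (∑ i : Fin n, if (j : ℕ) + 1 ≤ i then f i else 0) = ∑ i ∈ Ioi j, f i := by
  rw [← sum_filter, ← filter_lt_eq_Ioi]
  simp only [Nat.add_one_le_iff, Fin.val_fin_lt]

lemma cumPower_mono (hp : ∀ i, 0 ≤ pbar i) : Monotone (cumPower pbar) := fun k l hkl =>
  sum_le_sum fun i _ => by
    split_ifs with hk hl hl
    exacts [le_rfl, (hl (hk.trans_le hkl)).elim, hp i, le_rfl]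

/-- If devices are indexed with nonincreasing times-to-go, the capacity curve is piecewise
linear: on each interval `[P_{k-1}, P_k]` it is affine with slope `-x_k`, and at the
breakpoints `Ω(P_k) = Σ_{i=k+1}^n p̄ᵢ xᵢ`. -/
theorem capacity_piecewise_linear {n : ℕ} (pbar x : Fin n → ℝ)
    (hp : ∀ i, 0 < pbar i) (hx : ∀ i, 0 ≤ x i)
    (hsorted : ∀ i j : Fin n, i ≤ j → x j ≤ x i) :
    (∀ k : ℕ, ∀ _h1 : 1 ≤ k, ∀ hkn : k ≤ n, ∀ p : ℝ,
        cumPower pbar (k - 1) ≤ p → p ≤ cumPower pbar k →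
        capacity pbar x p =
          (∑ i : Fin n, if k ≤ (i : ℕ) then pbar i * x i else 0)
            + (cumPower pbar k - p) * x ⟨k - 1, by omega⟩) ∧
    (∀ k : ℕ, k ≤ n →
        capacity pbar x (cumPower pbar k)
          = ∑ i : Fin n, if k ≤ (i : ℕ) then pbar i * x i else 0) := by
  have hp₀ i : 0 ≤ pbar i := (hp i).le
  have piecewise (j : Fin n) (p : ℝ) (hlo : cumPower pbar j ≤ p)
      (hhi : p ≤ cumPower pbar (j + 1)) :
      capacity pbar x p = (∑ i : Fin n, if (j : ℕ) + 1 ≤ i then pbar i * x i else 0)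
        + (cumPower pbar (j + 1) - p) * x j := by
    rw [cumPower_val] at hlo
    rw [cumPower_val_add_one] at hhi
    rw [cumPower_val_add_one, sum_ite_val_add_one_le]
    exact capacity_eq_of_mem_Icc hp₀ hx hsorted j hlo hhi
  refine ⟨fun k hk hkn p => ?_, fun k hkn => ?_⟩
  · obtain ⟨j, rfl⟩ : ∃ j : Fin n, (j : ℕ) + 1 = k := ⟨⟨k - 1, by omega⟩, by simp only; omega⟩
    simpa using piecewise j p
  · rcases k with _ | k
    · simpa [cumPower] using capacity_zero hp₀ hx
    · simpa using piecewise ⟨k, hkn⟩ _ (cumPower_mono hp₀ k.le_succ) le_rfl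
end

section
/- (Theorem 1) Let P^d be a discharging request, let x* ≥ 0, set x̃ᵢ = min{xᵢ, x*} and E^d = Σᵢ p̄ᵢ·min{xᵢ, x*}, and suppose ∫₀^∞ P^d(t) dt ≤ E^d. Then P^d is feasible for the fleet (p̄, x) if and only if P^d is feasible for the truncated fleet (p̄, x̃). -/
open MeasureTheory Set Finset

def Feasible {n : ℕ} (pbar x : Fin n → ℝ) (Pd : ℝ → ℝ) : Prop :=
  ∃ u : Fin n → ℝ → ℝ,
    (∀ i, MeasureTheory.IntegrableOn (u i) (Set.Ioi 0)) ∧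
    (∀ᵐ t ∂(MeasureTheory.volume.restrict (Set.Ioi (0:ℝ))),
      (∀ i, 0 ≤ u i t ∧ u i t ≤ pbar i) ∧ (∑ i, u i t) = Pd t) ∧
    (∀ t ≥ (0:ℝ), ∀ i, 0 ≤ x i - (1 / pbar i) * ∫ s in Set.Ioc (0:ℝ) t, u i s)

/-!
Since the controls are nonnegative, the time-to-go constraints only bound the total energy
`aᵢ = ∫ uᵢ` delivered by each device, by `p̄ᵢ xᵢ`. Truncation only lowers the budgets of the
devices with `xᵢ > x*` to `p̄ᵢ x*`. If such a device `j` exceeds its new budget while some device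
`i` is below its budget, then `aᵢ / p̄ᵢ < x* < aⱼ / p̄ⱼ`, and letting `i` and `j` take over parts of
each other's output moves energy from `j` to `i` without violating the power limits, until one
of the two meets its budget. As the total energy is at most `E^d`, finitely many such exchanges
bring every device within its truncated budget.
-/

variable {ι : Type*} [Fintype ι]

def IsDispatch (pbar : ι → ℝ) (Pd : ℝ → ℝ) (u : ι → ℝ → ℝ) : Prop :=
  (∀ i, IntegrableOn (u i) (Ioi 0)) ∧
    ∀ᵐ t ∂(volume.restrict (Ioi (0 : ℝ))),
      (∀ i, 0 ≤ u i t ∧ u i t ≤ pbar i) ∧ ∑ i, u i t = Pd t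

noncomputable def dischargedEnergy (u : ι → ℝ → ℝ) (i : ι) : ℝ :=
  ∫ t in Ioi 0, u i t

theorem feasible_iff_exists_isDispatch {n : ℕ} {pbar : Fin n → ℝ} (hp : ∀ i, 0 < pbar i)
    (x : Fin n → ℝ) (Pd : ℝ → ℝ) :
    Feasible pbar x Pd ↔
      ∃ u, IsDispatch pbar Pd u ∧ ∀ i, dischargedEnergy u i ≤ pbar i * x i := by
  have time_to_go_nonneg_iff : ∀ i (e : ℝ), 0 ≤ x i - 1 / pbar i * e ↔ e ≤ pbar i * x i := by
    intro i e
    rw [sub_nonneg, one_div, inv_mul_le_iff₀ (hp i)]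
  constructor
  · rintro ⟨u, hint, hae, hx⟩
    refine ⟨u, ⟨hint, hae⟩, fun i ↦ ?_⟩
    refine le_of_tendsto (intervalIntegral_tendsto_integral_Ioi 0 (hint i) Filter.tendsto_id) ?_
    filter_upwards [Filter.eventually_ge_atTop 0] with t ht
    rw [id, intervalIntegral.integral_of_le ht]
    exact (time_to_go_nonneg_iff i _).1 (hx t ht i)
  · rintro ⟨u, ⟨hint, hae⟩, hu⟩
    refine ⟨u, hint, hae, fun t _ i ↦ (time_to_go_nonneg_iff i _).2 (le_trans ?_ (hu i))⟩
    refine setIntegral_mono_set (hint i) ?_ Ioc_subset_Ioi_self.eventuallyLE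
    filter_upwards [hae] with s hs using (hs.1 i).1

theorem add_mul_div_sub_div_mem_Icc {a b p q μ : ℝ} (hp : 0 < p) (hq : 0 < q)
    (ha : a ∈ Set.Icc 0 p) (hb : b ∈ Set.Icc 0 q) (hμ : μ ∈ Set.Icc 0 p) :
    a + μ * (b / q - a / p) ∈ Set.Icc 0 p := by
  have hs : a / p ∈ Set.Icc 0 1 := ⟨div_nonneg ha.1 hp.le, (div_le_one hp).2 ha.2⟩
  have hr : b / q ∈ Set.Icc 0 1 := ⟨div_nonneg hb.1 hq.le, (div_le_one hq).2 hb.2⟩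
  have hap : a = p * (a / p) := by field_simp
  constructor <;> nlinarith [mul_nonneg (sub_nonneg.2 hμ.2) hs.1, mul_nonneg hμ.1 hr.1,
    mul_nonneg (sub_nonneg.2 hμ.2) (sub_nonneg.2 hs.2), mul_nonneg hμ.1 (sub_nonneg.2 hr.2)]

namespace IsDispatch

variable {pbar : ι → ℝ} {Pd : ℝ → ℝ} {u : ι → ℝ → ℝ}

theorem sum_dischargedEnergy (hu : IsDispatch pbar Pd u) :
    ∑ i, dischargedEnergy u i = ∫ t in Ioi 0, Pd t := by
  simp only [dischargedEnergy]
  rw [← integral_finsetSum _ fun i _ ↦ hu.1 i]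
  refine integral_congr_ae ?_
  filter_upwards [hu.2] with t ht using ht.2

variable [DecidableEq ι]

-- `i` takes over `μ uⱼ / p̄ⱼ` of `j`'s power and hands `μ uᵢ / p̄ᵢ` of its own to `j`; with the
-- rates `sₖ = uₖ / p̄ₖ ∈ [0, 1]`, `i` then runs at `(p̄ᵢ - μ) sᵢ + μ sⱼ ≤ p̄ᵢ`.
theorem exists_exchange (hp : ∀ i, 0 < pbar i) (hu : IsDispatch pbar Pd u) {i j : ι}
    (hij : i ≠ j) {μ : ℝ} (hμi : μ ∈ Set.Icc 0 (pbar i)) (hμj : μ ∈ Set.Icc 0 (pbar j)) :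
    ∃ v, IsDispatch pbar Pd v ∧ dischargedEnergy v = dischargedEnergy u +
      (μ * (dischargedEnergy u j / pbar j - dischargedEnergy u i / pbar i)) •
        (Pi.single i 1 - Pi.single j 1) := by
  set c : ι → ℝ := Pi.single i 1 - Pi.single j 1
  set d : ℝ → ℝ := fun t ↦ μ * (u j t / pbar j - u i t / pbar i)
  have hd : IntegrableOn d (Ioi 0) :=
    (((hu.1 j).div_const _).sub ((hu.1 i).div_const _)).const_mul μ
  refine ⟨fun k t ↦ u k t + c k * d t, ⟨fun k ↦ (hu.1 k).add (hd.const_mul _), ?_⟩, ?_⟩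
  · filter_upwards [hu.2] with t ⟨hbox, hsum⟩
    have hmem : ∀ k, u k t ∈ Set.Icc 0 (pbar k) := hbox
    refine ⟨fun k ↦ ?_, by simp [c, sum_add_distrib, ← sum_mul, hsum]⟩
    show u k t + c k * d t ∈ Set.Icc 0 (pbar k)
    rcases eq_or_ne k i with rfl | hki
    · simpa [c, d, hij] using
        add_mul_div_sub_div_mem_Icc (hp k) (hp j) (hmem k) (hmem j) hμi
    rcases eq_or_ne k j with rfl | hkj
    · convert add_mul_div_sub_div_mem_Icc (hp k) (hp i) (hmem k) (hmem i) hμj using 1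
      simp only [c, d, Pi.sub_apply, Pi.single_eq_same, Pi.single_eq_of_ne hij.symm]
      ring
    · simpa [c, hki, hkj] using hbox k
  · ext k
    simp only [dischargedEnergy, Pi.add_apply, Pi.smul_apply, smul_eq_mul]
    rw [integral_add (hu.1 k) (hd.const_mul _), integral_const_mul, integral_const_mul,
      integral_sub ((hu.1 j).div_const _) ((hu.1 i).div_const _), integral_div, integral_div]
    ring

theorem exists_transfer (hp : ∀ i, 0 < pbar i) (hu : IsDispatch pbar Pd u) {i j : ι}
    (hij : i ≠ j) {δ c : ℝ} (hδ : 0 ≤ δ) (hi : dischargedEnergy u i + δ ≤ pbar i * c)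
    (hj : pbar j * c ≤ dischargedEnergy u j - δ) :
    ∃ v, IsDispatch pbar Pd v ∧
      dischargedEnergy v = dischargedEnergy u + δ • (Pi.single i 1 - Pi.single j 1) := by
  rcases hδ.eq_or_lt with rfl | hδ
  · exact ⟨u, hu, by simp⟩
  set a := dischargedEnergy u
  set D := a j / pbar j - a i / pbar i
  have hci : a i / pbar i + δ / pbar i ≤ c := by
    rw [← add_div, div_le_iff₀ (hp i)]; linarith
  have hcj : c ≤ a j / pbar j - δ / pbar j := by
    rw [← sub_div, le_div_iff₀ (hp j)]; linarith
  have hDi : δ / pbar i ≤ D := by linarith [div_pos hδ (hp j)]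
  have hDj : δ / pbar j ≤ D := by linarith [div_pos hδ (hp i)]
  have hD : 0 < D := (div_pos hδ (hp i)).trans_le hDi
  have hμ : ∀ k, δ / pbar k ≤ D → δ / D ∈ Set.Icc 0 (pbar k) := fun k hk ↦
    ⟨(div_pos hδ hD).le, (div_le_iff₀ hD).2 (by rwa [div_le_iff₀' (hp k)] at hk)⟩
  obtain ⟨v, hv, hv_energy⟩ := hu.exists_exchange hp hij (hμ i hDi) (hμ j hDj)
  exact ⟨v, hv, by rwa [div_mul_cancel₀ δ hD.ne'] at hv_energy⟩

end IsDispatch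

theorem exists_le_of_forall_transfer [DecidableEq ι] (P : (ι → ℝ) → Prop) {C E : ι → ℝ}
    (htransfer : ∀ a i j δ, P a → i ≠ j → 0 ≤ δ → a i + δ ≤ C i → C j ≤ a j - δ →
      P (a + δ • (Pi.single i 1 - Pi.single j 1)))
    (hEC : E ≤ C) {a : ι → ℝ} (ha : P a) (hsum : ∑ i, a i ≤ ∑ i, E i)
    (hexcess : ∀ i, E i < a i → E i = C i) : ∃ b, P b ∧ b ≤ E := by
  induction hk : #{i | a i ≠ E i} using Nat.strong_induction_on generalizing a with
  | _ k ih =>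
  by_cases hle : a ≤ E
  · exact ⟨a, ha, hle⟩
  obtain ⟨j, hj⟩ : ∃ j, E j < a j := by simpa [Pi.le_def] using hle
  obtain ⟨i, hi⟩ : ∃ i, a i < E i := by
    by_contra! h
    exact (sum_lt_sum (fun i _ ↦ h i) ⟨j, Finset.mem_univ j, hj⟩).not_ge hsum
  have hij : i ≠ j := by rintro rfl; linarith
  have hCj := hexcess j hj
  set δ := min (E i - a i) (a j - E j)
  set a' := a + δ • (Pi.single i 1 - Pi.single j 1)
  have ha'i : a' i = a i + δ := by simp [a', hij]
  have ha'j : a' j = a j - δ := by simp [a', hij.symm, sub_eq_add_neg]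
  have ha'k : ∀ k, k ≠ i → k ≠ j → a' k = a k := by intro k hki hkj; simp [a', hki, hkj]
  have hδi : δ ≤ E i - a i := min_le_left ..
  have hδj : δ ≤ a j - E j := min_le_right ..
  have hδ : 0 ≤ δ := le_min (by linarith) (by linarith)
  refine ih _ ?_ (htransfer a i j δ ha hij hδ (by linarith [hEC i]) (by linarith)) ?_ ?_ rfl
  · rw [← hk]
    refine card_lt_card ((Finset.ssubset_iff_of_subset fun k ↦ ?_).2 ?_)
    · simp only [mem_filter, Finset.mem_univ, true_and]
      contrapose!
      intro hk
      exact (ha'k k (by rintro rfl; linarith) (by rintro rfl; linarith)).trans hk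
    · simp only [mem_filter, Finset.mem_univ, true_and, not_not]
      obtain h | h : δ = E i - a i ∨ δ = a j - E j := min_choice _ _
      · exact ⟨i, hi.ne, by linarith⟩
      · exact ⟨j, hj.ne', by linarith⟩
  · have : ∑ k, a' k = ∑ k, a k := by
      simp [a', sum_add_distrib, ← mul_sum, sum_sub_distrib]
    rwa [this]
  · intro k hk
    rcases eq_or_ne k i with rfl | hki
    · linarith
    rcases eq_or_ne k j with rfl | hkj
    · exact hCj
    · exact hexcess k (ha'k k hki hkj ▸ hk)

theorem feasible_iff_feasible_truncated_general {n : ℕ} (pbar x : Fin n → ℝ)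
    (hp : ∀ i, 0 < pbar i)
    (Pd : ℝ → ℝ)
    (xs : ℝ)
    (hE : (∫ t in Set.Ioi (0:ℝ), Pd t) ≤ ∑ i, pbar i * min (x i) xs) :
    Feasible pbar x Pd ↔ Feasible pbar (fun i => min (x i) xs) Pd := by
  simp only [feasible_iff_exists_isDispatch hp]
  constructor
  · rintro ⟨u, hu, hux⟩
    have hexcess : ∀ i, pbar i * min (x i) xs < dischargedEnergy u i →
        pbar i * min (x i) xs = pbar i * xs := by
      intro i hi
      rw [min_eq_right (le_of_not_ge fun hle ↦ (hux i).not_gt (by rwa [min_eq_left hle] at hi))]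
    obtain ⟨_, ⟨v, hv, rfl⟩, hv_le⟩ :=
      exists_le_of_forall_transfer (fun a ↦ ∃ v, IsDispatch pbar Pd v ∧ dischargedEnergy v = a)
        (by rintro _ i j δ ⟨v, hv, rfl⟩ hij hδ hi hj; exact hv.exists_transfer hp hij hδ hi hj)
        (fun i ↦ mul_le_mul_of_nonneg_left (min_le_right _ _) (hp i).le) ⟨u, hu, rfl⟩
        (hu.sum_dischargedEnergy.trans_le hE) hexcess
    exact ⟨v, hv, hv_le⟩
  · rintro ⟨u, hu, hux⟩
    exact ⟨u, hu, fun i ↦ (hux i).trans (mul_le_mul_of_nonneg_left (min_le_left _ _) (hp i).le)⟩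

/-- Theorem 1: if the total energy of a discharging request is at most
`E^d = Σᵢ p̄ᵢ·min{xᵢ, x*}`, then feasibility for the fleet `(p̄, x)` is equivalent to
feasibility for the truncated fleet `(p̄, x̃)` with `x̃ᵢ = min{xᵢ, x*}`. -/
theorem feasible_iff_feasible_truncated {n : ℕ} (pbar x : Fin n → ℝ)
    (hp : ∀ i, 0 < pbar i) (hx : ∀ i, 0 ≤ x i)
    (Pd : ℝ → ℝ) (hInt : MeasureTheory.IntegrableOn Pd (Set.Ioi 0))
    (hPos : ∀ t ≥ (0:ℝ), 0 ≤ Pd t)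
    (xs : ℝ) (hxs : 0 ≤ xs)
    (hE : (∫ t in Set.Ioi (0:ℝ), Pd t) ≤ ∑ i, pbar i * min (x i) xs) :
    Feasible pbar x Pd ↔ Feasible pbar (fun i => min (x i) xs) Pd :=
  feasible_iff_feasible_truncated_general pbar x hp Pd xs hE
end

section
/- (Theorem 2) Let fleet 1 have parameters (p̄⁽¹⁾, x⁽¹⁾) ∈ ℝⁿ × ℝⁿ and fleet 2 have parameters (p̄⁽²⁾, x⁽²⁾) ∈ ℝᵐ × ℝᵐ, and let the aggregate fleet (p̄, x) ∈ ℝⁿ⁺ᵐ × ℝⁿ⁺ᵐ be their concatenation. Then the discharging flexibility of the aggregate fleet satisfies F_{p̄,x} = [0,∞)² ∖ (F^∁₁ ⊕ F^∁₂), where F^∁ⱼ is the complement of the flexibility of fleet j relative to [0,∞)² and ⊕ denotes the Minkowski sum of sets in ℝ². -/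
open MeasureTheory Set Finset Pointwise

/-- The discharging flexibility `F_{p̄,x} = {(p,E) ∈ [0,∞)² : E ≤ Ω_{p̄,x}(p)}`. -/
noncomputable def flexibility {n : ℕ} (pbar x : Fin n → ℝ) : Set (ℝ × ℝ) :=
  {q : ℝ × ℝ | 0 ≤ q.1 ∧ 0 ≤ q.2 ∧ q.2 ≤ capacity pbar x q.1}

/-- The complement of the flexibility relative to the quadrant `[0,∞)²`. -/
noncomputable def flexibilityCompl {n : ℕ} (pbar x : Fin n → ℝ) : Set (ℝ × ℝ) :=
  {q : ℝ × ℝ | 0 ≤ q.1 ∧ 0 ≤ q.2 ∧ capacity pbar x q.1 < q.2}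


/-!
Both capacity curves are E-p transforms of signals that are antitone on `[0, ∞)`, and the
aggregate signal is their sum. Splitting a power level `p = p₁ + p₂` between the fleets never
needs less energy, since `max (a + b - p) 0 ≤ max (a - p₁) 0 + max (b - p₂) 0`, and because the
signals are comonotone some split needs exactly as much: `Ω` is the infimal convolution of `Ω₁`
and `Ω₂` on `[0, ∞)`. The strict epigraph of an infimal convolution is the Minkowski sum of the
strict epigraphs, and the flexibility is the quadrant minus the strict epigraph.
-/

open Filter

section EpTransform

variable {R R₁ R₂ : ℝ → ℝ} {p p₁ p₂ : ℝ}

lemma max_add_sub_add_le (a b : ℝ) :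
    max (a + b - (p₁ + p₂)) 0 ≤ max (a - p₁) 0 + max (b - p₂) 0 := by
  have := le_max_left (a - p₁) 0
  have := le_max_left (b - p₂) 0
  exact max_le (by linarith) (by positivity)

lemma max_add_sub_eq_of_mem_uIcc {a b : ℝ} (h : p₁ ∈ Set.uIcc a (p - b)) :
    max (a + b - p) 0 = max (a - p₁) 0 + max (b - (p - p₁)) 0 := by
  rcases Set.mem_uIcc.1 h with ⟨ha, hb⟩ | ⟨hb, ha⟩
  · rw [max_eq_right (by linarith), max_eq_right (by linarith), max_eq_right (by linarith)]
    norm_num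
  · rw [max_eq_left (by linarith), max_eq_left (by linarith), max_eq_left (by linarith)]
    ring

lemma EpTransform_nonneg (R : ℝ → ℝ) (p : ℝ) : 0 ≤ EpTransform R p :=
  setIntegral_nonneg measurableSet_Ioi fun _ _ => le_max_right _ _

lemma MeasureTheory.IntegrableOn.max_sub_zero {s : Set ℝ} (hR : IntegrableOn R s) (hp : 0 ≤ p) :
    IntegrableOn (fun t => max (R t - p) 0) s :=
  hR.abs.mono' ((hR.1.sub aestronglyMeasurable_const).sup aestronglyMeasurable_const)
    (ae_of_all _ fun t => by
      rw [Real.norm_of_nonneg (le_max_right _ _)]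
      exact max_le (by linarith [le_abs_self (R t)]) (abs_nonneg _))

lemma EpTransform_add_le (hR₁ : IntegrableOn R₁ (Set.Ioi 0)) (hR₂ : IntegrableOn R₂ (Set.Ioi 0))
    (hp₁ : 0 ≤ p₁) (hp₂ : 0 ≤ p₂) :
    EpTransform (R₁ + R₂) (p₁ + p₂) ≤ EpTransform R₁ p₁ + EpTransform R₂ p₂ := by
  unfold EpTransform
  rw [← integral_add (hR₁.max_sub_zero hp₁) (hR₂.max_sub_zero hp₂)]
  exact integral_mono_of_nonneg (ae_of_all _ fun _ => le_max_right _ _)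
    ((hR₁.max_sub_zero hp₁).add (hR₂.max_sub_zero hp₂))
    (ae_of_all _ fun t => max_add_sub_add_le (R₁ t) (R₂ t))

lemma EpTransform_add_eq_of_mem_uIcc (hR₁ : IntegrableOn R₁ (Set.Ioi 0))
    (hR₂ : IntegrableOn R₂ (Set.Ioi 0)) (hp₁ : p₁ ∈ Set.Icc 0 p)
    (h : ∀ t ∈ Set.Ioi 0, p₁ ∈ Set.uIcc (R₁ t) (p - R₂ t)) :
    EpTransform (R₁ + R₂) p = EpTransform R₁ p₁ + EpTransform R₂ (p - p₁) := by
  unfold EpTransform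
  rw [← integral_add (hR₁.max_sub_zero hp₁.1) (hR₂.max_sub_zero (sub_nonneg.2 hp₁.2))]
  exact setIntegral_congr_fun measurableSet_Ioi fun t ht => max_add_sub_eq_of_mem_uIcc (h t ht)

/-- For antitone `R₁, R₂` the intervals between `R₁ t` and `p - R₂ t` pairwise intersect, so by
one-dimensional Helly they have a common point: the supremum of their left ends. -/
lemma exists_mem_uIcc_of_antitoneOn (h₁ : AntitoneOn R₁ (Set.Ioi 0))
    (h₂ : AntitoneOn R₂ (Set.Ioi 0)) (hp : 0 ≤ p)
    (hzero : ∀ᶠ t in atTop, R₁ t = 0 ∧ R₂ t = 0) :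
    ∃ p₁ ∈ Set.Icc 0 p, ∀ t ∈ Set.Ioi 0, p₁ ∈ Set.uIcc (R₁ t) (p - R₂ t) := by
  have hmin_le_max : ∀ t ∈ Set.Ioi (0 : ℝ), ∀ s ∈ Set.Ioi (0 : ℝ),
      min (R₁ t) (p - R₂ t) ≤ max (R₁ s) (p - R₂ s) := by
    intro t ht s hs
    rcases le_total t s with hts | hst
    · exact (min_le_right _ _).trans
        ((sub_le_sub_left (h₂ ht hs hts) p).trans (le_max_right _ _))
    · exact (min_le_left _ _).trans ((h₁ hs ht hst).trans (le_max_left _ _))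
  obtain ⟨T, ⟨hR₁T, hR₂T⟩, hT⟩ := (hzero.and (eventually_gt_atTop 0)).exists
  let L : Set.Ioi (0 : ℝ) → ℝ := fun t => min (R₁ t) (p - R₂ t)
  have hL : BddAbove (Set.range L) := ⟨p, by
    rintro _ ⟨t, rfl⟩
    simpa [L, hR₁T, hR₂T, hp] using hmin_le_max t t.2 T hT⟩
  have : Nonempty (Set.Ioi (0 : ℝ)) := ⟨⟨T, hT⟩⟩
  have hmem : ∀ t ∈ Set.Ioi (0 : ℝ), ⨆ s, L s ∈ Set.uIcc (R₁ t) (p - R₂ t) := fun t ht =>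
    ⟨le_ciSup hL ⟨t, ht⟩, ciSup_le fun s => hmin_le_max s s.2 t ht⟩
  refine ⟨⨆ s, L s, ?_, hmem⟩
  simpa [Set.uIcc, hR₁T, hR₂T, hp] using hmem T hT

end EpTransform

/-- `hle` and `hsplit` say that `Ω` is the infimal convolution of `Ω₁` and `Ω₂` on `[0, ∞)`. -/
lemma setOf_lt_eq_add_of_infConvolution {Ω Ω₁ Ω₂ : ℝ → ℝ}
    (hΩ₁ : ∀ p, 0 ≤ Ω₁ p) (hΩ₂ : ∀ p, 0 ≤ Ω₂ p)
    (hle : ∀ p₁ p₂, 0 ≤ p₁ → 0 ≤ p₂ → Ω (p₁ + p₂) ≤ Ω₁ p₁ + Ω₂ p₂)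
    (hsplit : ∀ p, 0 ≤ p → ∃ p₁ ∈ Set.Icc 0 p, Ω p = Ω₁ p₁ + Ω₂ (p - p₁)) :
    {q : ℝ × ℝ | 0 ≤ q.1 ∧ 0 ≤ q.2 ∧ Ω q.1 < q.2} =
      {q : ℝ × ℝ | 0 ≤ q.1 ∧ 0 ≤ q.2 ∧ Ω₁ q.1 < q.2} +
        {q : ℝ × ℝ | 0 ≤ q.1 ∧ 0 ≤ q.2 ∧ Ω₂ q.1 < q.2} := by
  ext ⟨p, E⟩
  simp only [Set.mem_add, Set.mem_ofPred_eq, Prod.exists, Prod.mk_add_mk, Prod.mk.injEq]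
  constructor
  · rintro ⟨hp, -, hlt⟩
    obtain ⟨p₁, ⟨hp₁, hp₁p⟩, heq⟩ := hsplit p hp
    set δ := E - Ω p
    refine ⟨p₁, Ω₁ p₁ + δ / 2, ⟨hp₁, by linarith [hΩ₁ p₁], by linarith⟩,
      p - p₁, Ω₂ (p - p₁) + δ / 2, ⟨by linarith, by linarith [hΩ₂ (p - p₁)], by linarith⟩,
      by ring, by linarith⟩
  · rintro ⟨p₁, E₁, ⟨hp₁, hE₁, hlt₁⟩, p₂, E₂, ⟨hp₂, hE₂, hlt₂⟩, rfl, rfl⟩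
    exact ⟨add_nonneg hp₁ hp₂, add_nonneg hE₁ hE₂, (hle p₁ p₂ hp₁ hp₂).trans_lt (by linarith)⟩

section WorstCase

variable {n : ℕ} (pbar x : Fin n → ℝ)

lemma worstCase_eq_sum_indicator :
    worstCase pbar x = fun t => ∑ i, (Set.Ico 0 (x i)).indicator (fun _ => pbar i) t := by
  ext t
  simp [worstCase, Set.indicator, Set.mem_Ico]

lemma integrable_worstCase : Integrable (worstCase pbar x) := by
  rw [worstCase_eq_sum_indicator]
  exact integrable_finsetSum _ fun i _ =>
    (integrable_indicator_iff measurableSet_Ico).2 (integrableOn_const measure_Ico_lt_top.ne)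

lemma antitoneOn_worstCase (hp : ∀ i, 0 ≤ pbar i) :
    AntitoneOn (worstCase pbar x) (Set.Ici 0) := by
  intro s hs t _ hst
  refine Finset.sum_le_sum fun i _ => ?_
  by_cases h : 0 ≤ t ∧ t < x i
  · simp [h, Set.mem_Ici.1 hs, hst.trans_lt h.2]
  · simp only [if_neg h]
    split_ifs <;> simp [hp i]

lemma eventually_worstCase_eq_zero : ∀ᶠ t in atTop, worstCase pbar x t = 0 := by
  filter_upwards [eventually_all.2 fun i => eventually_ge_atTop (x i)] with t ht
  exact Finset.sum_eq_zero fun i _ => if_neg fun h => (ht i).not_gt h.2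

lemma worstCase_append {m : ℕ} (pbar₂ x₂ : Fin m → ℝ) :
    worstCase (Fin.append pbar pbar₂) (Fin.append x x₂) =
      worstCase pbar x + worstCase pbar₂ x₂ := by
  ext t
  simp [worstCase, Fin.sum_univ_add]

end WorstCase

lemma flexibility_eq_diff_flexibilityCompl {n : ℕ} (pbar x : Fin n → ℝ) :
    flexibility pbar x = {q : ℝ × ℝ | 0 ≤ q.1 ∧ 0 ≤ q.2} \ flexibilityCompl pbar x := by
  ext q
  simp only [flexibility, flexibilityCompl, Set.mem_sdiff, Set.mem_ofPred_eq, not_and, not_lt]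
  tauto

section Aggregate

variable {n m : ℕ} (pbar₁ x₁ : Fin n → ℝ) (pbar₂ x₂ : Fin m → ℝ)

lemma capacity_append_le {p₁ p₂ : ℝ} (hp₁ : 0 ≤ p₁) (hp₂ : 0 ≤ p₂) :
    capacity (Fin.append pbar₁ pbar₂) (Fin.append x₁ x₂) (p₁ + p₂) ≤
      capacity pbar₁ x₁ p₁ + capacity pbar₂ x₂ p₂ := by
  rw [capacity, worstCase_append]
  exact EpTransform_add_le (integrable_worstCase pbar₁ x₁).integrableOn
    (integrable_worstCase pbar₂ x₂).integrableOn hp₁ hp₂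

lemma exists_capacity_append_eq (hpbar₁ : ∀ i, 0 ≤ pbar₁ i) (hpbar₂ : ∀ i, 0 ≤ pbar₂ i)
    {p : ℝ} (hp : 0 ≤ p) :
    ∃ p₁ ∈ Set.Icc 0 p, capacity (Fin.append pbar₁ pbar₂) (Fin.append x₁ x₂) p =
      capacity pbar₁ x₁ p₁ + capacity pbar₂ x₂ (p - p₁) := by
  obtain ⟨p₁, hp₁, hsplit⟩ := exists_mem_uIcc_of_antitoneOn
    ((antitoneOn_worstCase pbar₁ x₁ hpbar₁).mono Set.Ioi_subset_Ici_self)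
    ((antitoneOn_worstCase pbar₂ x₂ hpbar₂).mono Set.Ioi_subset_Ici_self) hp
    ((eventually_worstCase_eq_zero pbar₁ x₁).and (eventually_worstCase_eq_zero pbar₂ x₂))
  refine ⟨p₁, hp₁, ?_⟩
  rw [capacity, worstCase_append]
  exact EpTransform_add_eq_of_mem_uIcc (integrable_worstCase pbar₁ x₁).integrableOn
    (integrable_worstCase pbar₂ x₂).integrableOn hp₁ hsplit

lemma flexibilityCompl_append (hpbar₁ : ∀ i, 0 ≤ pbar₁ i) (hpbar₂ : ∀ i, 0 ≤ pbar₂ i) :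
    flexibilityCompl (Fin.append pbar₁ pbar₂) (Fin.append x₁ x₂) =
      flexibilityCompl pbar₁ x₁ + flexibilityCompl pbar₂ x₂ :=
  setOf_lt_eq_add_of_infConvolution (fun _ => EpTransform_nonneg _ _)
    (fun _ => EpTransform_nonneg _ _)
    (fun _ _ => capacity_append_le pbar₁ x₁ pbar₂ x₂)
    (fun _ => exists_capacity_append_eq pbar₁ x₁ pbar₂ x₂ hpbar₁ hpbar₂)

end Aggregate

theorem aggregate_flexibility_minkowski_general {n m : ℕ}
    (pbar1 x1 : Fin n → ℝ) (pbar2 x2 : Fin m → ℝ)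
    (hp1 : ∀ i, 0 < pbar1 i)
    (hp2 : ∀ i, 0 < pbar2 i) :
    flexibility (Fin.append pbar1 pbar2) (Fin.append x1 x2) =
      {q : ℝ × ℝ | 0 ≤ q.1 ∧ 0 ≤ q.2} \
        (flexibilityCompl pbar1 x1 + flexibilityCompl pbar2 x2) := by
  rw [flexibility_eq_diff_flexibilityCompl,
    flexibilityCompl_append pbar1 x1 pbar2 x2 (fun i => (hp1 i).le) (fun i => (hp2 i).le)]

/-- Theorem 2: the discharging flexibility of the aggregate (concatenated) fleet is the
quadrant minus the Minkowski sum of the complementary flexibilities of the two sub-fleets. -/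
theorem aggregate_flexibility_minkowski {n m : ℕ}
    (pbar1 x1 : Fin n → ℝ) (pbar2 x2 : Fin m → ℝ)
    (hp1 : ∀ i, 0 < pbar1 i) (hx1 : ∀ i, 0 ≤ x1 i)
    (hp2 : ∀ i, 0 < pbar2 i) (hx2 : ∀ i, 0 ≤ x2 i) :
    flexibility (Fin.append pbar1 pbar2) (Fin.append x1 x2) =
      {q : ℝ × ℝ | 0 ≤ q.1 ∧ 0 ≤ q.2} \
        (flexibilityCompl pbar1 x1 + flexibilityCompl pbar2 x2) :=
  aggregate_flexibility_minkowski_general pbar1 x1 pbar2 x2 hp1 hp2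
end

section
/- For 0 ≤ E^d ≤ Σᵢ p̄ᵢ xᵢ, there exists a unique x* ∈ [0, maxᵢ xᵢ] such that Σᵢ p̄ᵢ·min{xᵢ, x*} = E^d, provided n ≥ 1, p̄ᵢ > 0 for all i, and xᵢ ≥ 0 for all i with maxᵢ xᵢ > 0. -/
/-!
The delivered energy `t ↦ Σᵢ p̄ᵢ·min{xᵢ, t}` is continuous, vanishes at `0` and equals
`Σᵢ p̄ᵢxᵢ` at `t = maxᵢ xᵢ`; below that maximum the device attaining it still contributes
`p̄ⱼ·t`, so the map is strictly increasing there. The intermediate value theorem gives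
existence and strict monotonicity gives uniqueness.
-/

theorem existsUnique_mem_Icc_eq_of_strictMonoOn {f : ℝ → ℝ} {a b y : ℝ} (hab : a ≤ b)
    (hf : ContinuousOn f (Set.Icc a b)) (hmono : StrictMonoOn f (Set.Icc a b))
    (hy : y ∈ Set.Icc (f a) (f b)) :
    ∃! t, t ∈ Set.Icc a b ∧ f t = y := by
  obtain ⟨t, ht, hft⟩ := intermediate_value_Icc hab hf hy
  exact ⟨t, ⟨ht, hft⟩, fun s ⟨hs, hfs⟩ => hmono.injOn hs ht (hfs.trans hft.symm)⟩

section DischargeEnergy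

variable {ι : Type*} [Fintype ι] (p x : ι → ℝ)

noncomputable def dischargeEnergy (t : ℝ) : ℝ := ∑ i, p i * min (x i) t

theorem continuous_dischargeEnergy : Continuous (dischargeEnergy p x) :=
  continuous_finsetSum _ fun _ _ => continuous_const.mul (continuous_const.min continuous_id)

variable {p x}

theorem dischargeEnergy_zero (hx : ∀ i, 0 ≤ x i) : dischargeEnergy p x 0 = 0 :=
  Finset.sum_eq_zero fun i _ => by rw [min_eq_right (hx i), mul_zero]

theorem dischargeEnergy_of_forall_le {t : ℝ} (ht : ∀ i, x i ≤ t) :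
    dischargeEnergy p x t = ∑ i, p i * x i :=
  Finset.sum_congr rfl fun i _ => by rw [min_eq_left (ht i)]

theorem strictMonoOn_dischargeEnergy (hp : ∀ i, 0 ≤ p i) {j : ι} (hpj : 0 < p j) :
    StrictMonoOn (dischargeEnergy p x) (Set.Iic (x j)) := by
  intro s hs t ht hst
  refine Finset.sum_lt_sum (fun i _ => ?_) ⟨j, Finset.mem_univ j, ?_⟩
  · exact mul_le_mul_of_nonneg_left (min_le_min le_rfl hst.le) (hp i)
  · rw [min_eq_right (Set.mem_Iic.mp hs), min_eq_right (Set.mem_Iic.mp ht)]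
    exact mul_lt_mul_of_pos_left hst hpj

end DischargeEnergy

theorem exists_unique_min_discharge_time_general {n : ℕ} (hn : 0 < n)
    (pbar x : Fin n → ℝ)
    (hp : ∀ i, 0 < pbar i) (hx : ∀ i, 0 ≤ x i)
    (Ed : ℝ) (hEd0 : 0 ≤ Ed) (hEdtot : Ed ≤ ∑ i, pbar i * x i) :
    ∃! xs : ℝ, xs ∈ Set.Icc (0:ℝ) (Finset.univ.sup' ⟨⟨0, hn⟩, Finset.mem_univ _⟩ x) ∧
      (∑ i, pbar i * min (x i) xs) = Ed := by
  set M := Finset.univ.sup' ⟨⟨0, hn⟩, Finset.mem_univ _⟩ x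
  have hxM : ∀ i, x i ≤ M := fun i => Finset.le_sup' x (Finset.mem_univ i)
  obtain ⟨j, -, hj⟩ := Finset.exists_mem_eq_sup' ⟨⟨0, hn⟩, Finset.mem_univ _⟩ x
  have hmono : StrictMonoOn (dischargeEnergy pbar x) (Set.Icc 0 M) :=
    (strictMonoOn_dischargeEnergy (fun i => (hp i).le) (hp j)).mono
      fun t ht => Set.mem_Iic.mpr (hj ▸ ht.2)
  exact existsUnique_mem_Icc_eq_of_strictMonoOn ((hx _).trans (hxM ⟨0, hn⟩))
    (continuous_dischargeEnergy pbar x).continuousOn hmono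
    ⟨(dischargeEnergy_zero hx).trans_le hEd0,
      hEdtot.trans_eq (dischargeEnergy_of_forall_le hxM).symm⟩

/-- For any reserved discharge energy `E^d ∈ [0, Σᵢ p̄ᵢxᵢ]`, there is a unique minimum
discharge time `x* ∈ [0, maxᵢ xᵢ]` with `Σᵢ p̄ᵢ·min{xᵢ, x*} = E^d`. -/
theorem exists_unique_min_discharge_time {n : ℕ} (hn : 0 < n)
    (pbar x : Fin n → ℝ)
    (hp : ∀ i, 0 < pbar i) (hx : ∀ i, 0 ≤ x i)
    (hxmax : 0 < Finset.univ.sup' ⟨⟨0, hn⟩, Finset.mem_univ _⟩ x)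
    (Ed : ℝ) (hEd0 : 0 ≤ Ed) (hEdtot : Ed ≤ ∑ i, pbar i * x i) :
    ∃! xs : ℝ, xs ∈ Set.Icc (0:ℝ) (Finset.univ.sup' ⟨⟨0, hn⟩, Finset.mem_univ _⟩ x) ∧
      (∑ i, pbar i * min (x i) xs) = Ed :=
  exists_unique_min_discharge_time_general hn pbar x hp hx Ed hEd0 hEdtot
end

section
/- Let Δt > 0, p̄ᵢ > 0, xᵢ ≥ 0, P^d ≥ 0, and suppose ẑ ≥ 0 satisfies Σᵢ p̄ᵢ·max{0, min{xᵢ − ẑ, Δt}} = P^d·Δt. Define u_i = p̄ᵢ·max{0, min{(xᵢ − ẑ)/Δt, 1}}. Then: (i) 0 ≤ u_i ≤ p̄ᵢ for all i; (ii) Σᵢ u_i = P^d; and (iii) the updated states x_i′ = xᵢ − u_iΔt/p̄ᵢ satisfy x_i′ ≥ min{xᵢ, ẑ} ≥ 0 for all i. -/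
/-!
Writing `m = max 0 (min (x - ẑ) Δt)`, the input of device `i` is `uᵢ = p̄ᵢ m / Δt`, a fraction
`max 0 (min ((x - ẑ) / Δt) 1) ∈ [0, 1]` of its maximal power. Dividing the balance equation by
`Δt` gives `∑ uᵢ = P^d`, and the update lowers `xᵢ` by exactly `m ≤ max 0 (xᵢ - ẑ)`, so that
`xᵢ' ≥ xᵢ - max 0 (xᵢ - ẑ) = min xᵢ ẑ`.
-/

open Finset

section Clip

variable {K : Type*} [Field K] [LinearOrder K] [IsStrictOrderedRing K]

theorem max_zero_min_div_one_eq {c : K} (a : K) (hc : 0 < c) :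
    max 0 (min (a / c) 1) = max 0 (min a c) / c := by
  rw [eq_div_iff hc.ne', max_mul_of_nonneg _ _ hc.le, zero_mul,
    min_mul_of_nonneg _ _ hc.le, div_mul_cancel₀ _ hc.ne', one_mul]

theorem min_le_sub_max_zero_min (x z c : K) : min x z ≤ x - max 0 (min (x - z) c) := by
  rcases le_total x z with h | h
  · have : max 0 (min (x - z) c) = 0 := max_eq_left (min_le_of_left_le (sub_nonpos.2 h))
    simp [this]
  · have : max 0 (min (x - z) c) ≤ x - z := max_le (sub_nonneg.2 h) (min_le_left _ _)
    linarith [min_le_right x z]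

end Clip

theorem dispatch_policy_properties_general {n : ℕ}
    (pbar x : Fin n → ℝ) (Δt : ℝ) (hΔt : 0 < Δt)
    (hp : ∀ i, 0 < pbar i) (hx : ∀ i, 0 ≤ x i)
    (Pd : ℝ)
    (zhat : ℝ) (hz : 0 ≤ zhat)
    (hbal : (∑ i, pbar i * max 0 (min (x i - zhat) Δt)) = Pd * Δt) :
    (∀ i, 0 ≤ pbar i * max 0 (min ((x i - zhat) / Δt) 1) ∧
        pbar i * max 0 (min ((x i - zhat) / Δt) 1) ≤ pbar i) ∧
    (∑ i, pbar i * max 0 (min ((x i - zhat) / Δt) 1)) = Pd ∧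
    (∀ i,
        min (x i) zhat ≤
          x i - (pbar i * max 0 (min ((x i - zhat) / Δt) 1)) * Δt / pbar i ∧
        0 ≤ min (x i) zhat) := by
  have hu : ∀ i, pbar i * max 0 (min ((x i - zhat) / Δt) 1) =
      pbar i * max 0 (min (x i - zhat) Δt) / Δt := fun i => by
    rw [max_zero_min_div_one_eq _ hΔt, mul_div_assoc]
  refine ⟨fun i => ⟨?_, ?_⟩, ?_, fun i => ⟨?_, le_min (hx i) hz⟩⟩
  · exact mul_nonneg (hp i).le (le_max_left _ _)
  · exact mul_le_of_le_one_right (hp i).le (max_le zero_le_one (min_le_right _ _))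
  · rw [sum_congr rfl fun i _ => hu i, ← sum_div, hbal, mul_div_cancel_right₀ _ hΔt.ne']
  · have hdrop : pbar i * max 0 (min ((x i - zhat) / Δt) 1) * Δt / pbar i =
        max 0 (min (x i - zhat) Δt) := by
      rw [hu i]
      field_simp [hΔt.ne', (hp i).ne']
    rw [hdrop]
    exact min_le_sub_max_zero_min _ _ _

/-- Properties of the default dispatch policy: given a target state `ẑ ≥ 0` satisfying the
energy-balance equation, the allocated inputs `uᵢ = p̄ᵢ·max{0, min{(xᵢ − ẑ)/Δt, 1}}` respect
the device power limits, sum to the request `P^d`, and the updated times-to-go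
`xᵢ − uᵢΔt/p̄ᵢ` stay at or above `min{xᵢ, ẑ} ≥ 0`. -/
theorem dispatch_policy_properties {n : ℕ}
    (pbar x : Fin n → ℝ) (Δt : ℝ) (hΔt : 0 < Δt)
    (hp : ∀ i, 0 < pbar i) (hx : ∀ i, 0 ≤ x i)
    (Pd : ℝ) (hPd : 0 ≤ Pd)
    (zhat : ℝ) (hz : 0 ≤ zhat)
    (hbal : (∑ i, pbar i * max 0 (min (x i - zhat) Δt)) = Pd * Δt) :
    (∀ i, 0 ≤ pbar i * max 0 (min ((x i - zhat) / Δt) 1) ∧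
        pbar i * max 0 (min ((x i - zhat) / Δt) 1) ≤ pbar i) ∧
    (∑ i, pbar i * max 0 (min ((x i - zhat) / Δt) 1)) = Pd ∧
    (∀ i,
        min (x i) zhat ≤
          x i - (pbar i * max 0 (min ((x i - zhat) / Δt) 1)) * Δt / pbar i ∧
        0 ≤ min (x i) zhat) :=
  dispatch_policy_properties_general pbar x Δt hΔt hp hx Pd zhat hz hbal
end
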